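/- arXiv:math/0501133 — 4 statements merged into one kernel-verified Lean document; each statement's English description precedes it below -/
import Mathlib

section
/- Let f : ℝ → ℝ be a continuous nonnegative function with f(θ) → 0 as θ → -∞ and f(θ) → ∞ as θ → ∞ (i.e., f is a spiral). Then the polar curve r = f(θ) intersects every line in the plane: for all real A, B, C with (A, B) ≠ (0, 0), there exists θ ∈ ℝ such that A·f(θ)·cos θ + B·f(θ)·sin θ + C = 0. -/
open Real Filter

/-!
Write the line function along the curve as `(A cos θ + B sin θ) f θ + C`. The coefficient
`A cos θ + B sin θ` is `2π`-periodic, changes sign under `θ ↦ θ + π` and is not identically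
zero, so it is positive along one arithmetic progression `φ + 2πn` and negative along
`φ + π + 2πn`. Since `f → ∞`, the line function tends to `+∞` along the first and to `-∞`
along the second; the intermediate value theorem gives a zero.
-/

lemma cos_sin_combination_add_pi (A B θ : ℝ) :
    A * cos (θ + π) + B * sin (θ + π) = -(A * cos θ + B * sin θ) := by
  rw [cos_add_pi, sin_add_pi]; ring

lemma exists_cos_sin_combination_pos {A B : ℝ} (hAB : (A, B) ≠ (0, 0)) :
    ∃ φ, 0 < A * cos φ + B * sin φ := by
  obtain ⟨θ, hθ⟩ : ∃ θ, A * cos θ + B * sin θ ≠ 0 := by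
    by_contra! h
    apply hAB
    have hA := h 0
    have hB := h (π / 2)
    simp only [cos_zero, sin_zero, cos_pi_div_two, sin_pi_div_two] at hA hB
    simp only [Prod.mk.injEq]
    constructor <;> linarith
  rcases hθ.lt_or_gt with hneg | hpos
  · exact ⟨θ + π, by rw [cos_sin_combination_add_pi]; linarith⟩
  · exact ⟨θ, hpos⟩

lemma cos_sin_combination_add_nat_mul_two_pi (A B φ : ℝ) (n : ℕ) :
    A * cos (φ + n * (2 * π)) + B * sin (φ + n * (2 * π)) = A * cos φ + B * sin φ := by
  rw [cos_add_nat_mul_two_pi, sin_add_nat_mul_two_pi]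

lemma tendsto_comp_add_nat_mul_two_pi_atTop {f : ℝ → ℝ} (htop : Tendsto f atTop atTop)
    (φ : ℝ) : Tendsto (fun n : ℕ => f (φ + n * (2 * π))) atTop atTop :=
  htop.comp <| tendsto_atTop_add_const_left _ φ <|
    tendsto_natCast_atTop_atTop.atTop_mul_const (by positivity)

section Progression

variable {f : ℝ → ℝ} (htop : Tendsto f atTop atTop) {A B : ℝ} (C : ℝ) {φ : ℝ}
include htop

lemma tendsto_line_along_progression_atTop (hφ : 0 < A * cos φ + B * sin φ) :
    Tendsto (fun n : ℕ => (A * cos (φ + n * (2 * π)) + B * sin (φ + n * (2 * π))) *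
      f (φ + n * (2 * π)) + C) atTop atTop := by
  simp only [cos_sin_combination_add_nat_mul_two_pi]
  exact tendsto_atTop_add_const_right _ C
    ((tendsto_comp_add_nat_mul_two_pi_atTop htop φ).const_mul_atTop hφ)

lemma tendsto_line_along_progression_atBot (hφ : A * cos φ + B * sin φ < 0) :
    Tendsto (fun n : ℕ => (A * cos (φ + n * (2 * π)) + B * sin (φ + n * (2 * π))) *
      f (φ + n * (2 * π)) + C) atTop atBot := by
  simp only [cos_sin_combination_add_nat_mul_two_pi]
  exact tendsto_atBot_add_const_right _ C
    ((tendsto_comp_add_nat_mul_two_pi_atTop htop φ).const_mul_atTop_of_neg hφ)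

end Progression

theorem spiral_intersects_every_line_general
    (f : ℝ → ℝ) (hf : Continuous f)
    (htop : Tendsto f atTop atTop) :
    ∀ A B C : ℝ, (A, B) ≠ ((0 : ℝ), (0 : ℝ)) →
      ∃ θ : ℝ, A * f θ * Real.cos θ + B * f θ * Real.sin θ + C = 0 := by
  intro A B C hAB
  set g : ℝ → ℝ := fun θ => (A * cos θ + B * sin θ) * f θ + C
  obtain ⟨φ, hφ⟩ := exists_cos_sin_combination_pos hAB
  have hφπ : A * cos (φ + π) + B * sin (φ + π) < 0 := by
    rw [cos_sin_combination_add_pi]; linarith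
  obtain ⟨m, hm⟩ :=
    ((tendsto_line_along_progression_atTop htop C hφ).eventually_ge_atTop 0).exists
  obtain ⟨n, hn⟩ :=
    ((tendsto_line_along_progression_atBot htop C hφπ).eventually_le_atBot 0).exists
  have hg : Continuous g := by fun_prop
  obtain ⟨θ, hθ⟩ := intermediate_value_univ _ _ hg ⟨hn, hm⟩
  exact ⟨θ, by rw [← hθ]; ring⟩

theorem spiral_intersects_every_line
    (f : ℝ → ℝ) (hf : Continuous f) (hnn : ∀ θ, 0 ≤ f θ)
    (hbot : Tendsto f atBot (nhds 0)) (htop : Tendsto f atTop atTop) :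
    ∀ A B C : ℝ, (A, B) ≠ ((0 : ℝ), (0 : ℝ)) →
      ∃ θ : ℝ, A * f θ * Real.cos θ + B * f θ * Real.sin θ + C = 0 :=
  spiral_intersects_every_line_general f hf htop
end

section
/- Let a > 1 and θ₀ > 0, and set R = e^{θ₀^a} / √(1 + a²·θ₀^{2a−2}). Then (1/R)·( ∫_{−∞}^{0} √(1 + a²·|θ|^{2a−2})·e^{−|θ|^a} dθ + ∫₀^{θ₀} √(1 + a²·θ^{2a−2})·e^{θ^a} dθ ) ≥ √(1 + a²·θ₀^{2a−2}) ≥ a·θ₀^{a−1}, and hence this normalized arclength lower bound tends to ∞ as θ₀ → ∞. -/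
/-!
For `t ≥ 0` the speed `√(1 + a² t^(2a-2))` dominates `a t^(a-1)`, the derivative of `t^a`.
So on the negative half the integrand dominates the density `a t^(a-1) e^(-t^a)`, whose total
mass is `1` (a Gamma integral), and on `[0, θ₀]` it dominates the derivative of `e^(t^a)`,
contributing at least `e^(θ₀^a) - 1`. The arclength is therefore at least `e^(θ₀^a)`, and
dividing by `R` leaves `√(1 + a² θ₀^(2a-2)) ≥ a θ₀^(a-1) → ∞`.
-/

open Filter MeasureTheory Set Real

lemma sq_mul_rpow_sub_one {a t : ℝ} (ht : 0 ≤ t) :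
    (a * t ^ (a - 1)) ^ 2 = a ^ 2 * t ^ (2 * a - 2) := by
  rw [mul_pow, ← rpow_mul_natCast ht]
  push_cast
  ring_nf

lemma mul_rpow_sub_one_le_sqrt (a : ℝ) {t : ℝ} (ht : 0 ≤ t) :
    a * t ^ (a - 1) ≤ √(1 + a ^ 2 * t ^ (2 * a - 2)) :=
  le_sqrt_of_sq_le <| by rw [← sq_mul_rpow_sub_one ht]; linarith

lemma sqrt_one_add_sq_le_one_add_abs (x : ℝ) : √(1 + x ^ 2) ≤ 1 + |x| := by
  rw [sqrt_le_left (by positivity)]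
  nlinarith [abs_nonneg x, sq_abs x]

lemma integral_Ioi_mul_rpow_mul_exp_neg_rpow {a : ℝ} (ha : 0 < a) :
    ∫ t in Ioi (0 : ℝ), a * (t ^ (a - 1) * exp (-t ^ a)) = 1 := by
  rw [integral_const_mul, integral_rpow_mul_exp_neg_rpow ha (by linarith)]
  simp [ha.ne']

lemma integrableOn_sqrt_mul_exp_neg_rpow {a : ℝ} (ha : 0 < a) :
    IntegrableOn (fun t => √(1 + a ^ 2 * t ^ (2 * a - 2)) * exp (-t ^ a)) (Ioi 0) := by
  have hdom := (integrableOn_rpow_mul_exp_neg_rpow (s := 0) (by norm_num) ha).add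
    ((integrableOn_rpow_mul_exp_neg_rpow (s := a - 1) (by linarith) ha).const_mul a)
  refine hdom.mono' (by fun_prop) ?_
  filter_upwards [ae_restrict_mem measurableSet_Ioi] with t ht
  have hs := sqrt_one_add_sq_le_one_add_abs (a * t ^ (a - 1))
  rw [sq_mul_rpow_sub_one ht.le, abs_of_nonneg (mul_nonneg ha.le (rpow_nonneg ht.le _))] at hs
  rw [norm_of_nonneg (by positivity), Pi.add_apply, rpow_zero]
  nlinarith [exp_pos (-t ^ a)]

lemma one_le_integral_Ioi_sqrt_mul_exp_neg_rpow {a : ℝ} (ha : 0 < a) :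
    1 ≤ ∫ t in Ioi (0 : ℝ), √(1 + a ^ 2 * t ^ (2 * a - 2)) * exp (-t ^ a) := by
  refine (integral_Ioi_mul_rpow_mul_exp_neg_rpow ha).symm.le.trans <| setIntegral_mono_on
    ((integrableOn_rpow_mul_exp_neg_rpow (by linarith) ha).const_mul a)
    (integrableOn_sqrt_mul_exp_neg_rpow ha) measurableSet_Ioi fun t ht => ?_
  rw [← mul_assoc]
  exact mul_le_mul_of_nonneg_right (mul_rpow_sub_one_le_sqrt a (le_of_lt ht)) (exp_pos _).le

lemma setIntegral_Iic_comp_abs {E : Type*} [NormedAddCommGroup E] [NormedSpace ℝ E]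
    (f : ℝ → E) : ∫ x in Iic 0, f |x| = ∫ x in Ioi 0, f x := by
  rw [← neg_zero, ← integral_comp_neg_Iic, neg_zero]
  exact setIntegral_congr_fun measurableSet_Iic fun x hx => by rw [abs_of_nonpos hx]

lemma exp_rpow_sub_one_le_integral {a θ : ℝ} (ha : 1 ≤ a) (hθ : 0 ≤ θ) :
    exp (θ ^ a) - 1 ≤ ∫ t in (0 : ℝ)..θ, √(1 + a ^ 2 * t ^ (2 * a - 2)) * exp (t ^ a) := by
  have hderiv (t : ℝ) : HasDerivAt (fun t => exp (t ^ a)) (a * t ^ (a - 1) * exp (t ^ a)) t := by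
    simpa [mul_comm] using (hasDerivAt_rpow_const (Or.inr ha)).exp
  have hcont : Continuous fun t : ℝ => a * t ^ (a - 1) * exp (t ^ a) := by
    have := continuous_rpow_const (show 0 ≤ a - 1 by linarith)
    have := continuous_rpow_const (show 0 ≤ a by linarith)
    fun_prop
  have hcont' : Continuous fun t : ℝ => √(1 + a ^ 2 * t ^ (2 * a - 2)) * exp (t ^ a) := by
    have := continuous_rpow_const (show 0 ≤ 2 * a - 2 by linarith)
    have := continuous_rpow_const (show 0 ≤ a by linarith)
    fun_prop
  calc exp (θ ^ a) - 1 = ∫ t in (0 : ℝ)..θ, a * t ^ (a - 1) * exp (t ^ a) := by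
        rw [intervalIntegral.integral_eq_sub_of_hasDerivAt (fun t _ => hderiv t)
          (hcont.intervalIntegrable _ _), zero_rpow (by linarith), exp_zero]
    _ ≤ _ := intervalIntegral.integral_mono_on hθ (hcont.intervalIntegrable _ _)
        (hcont'.intervalIntegrable _ _) fun t ht =>
          mul_le_mul_of_nonneg_right (mul_rpow_sub_one_le_sqrt a ht.1) (exp_pos _).le

lemma exp_rpow_le_arclength {a θ₀ : ℝ} (ha : 1 ≤ a) (hθ₀ : 0 ≤ θ₀) :
    exp (θ₀ ^ a) ≤
      (∫ θ in Iic (0 : ℝ), √(1 + a ^ 2 * |θ| ^ (2 * a - 2)) * exp (-|θ| ^ a)) +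
        ∫ θ in (0 : ℝ)..θ₀, √(1 + a ^ 2 * θ ^ (2 * a - 2)) * exp (θ ^ a) := by
  rw [setIntegral_Iic_comp_abs fun t => √(1 + a ^ 2 * t ^ (2 * a - 2)) * exp (-t ^ a)]
  linarith [one_le_integral_Ioi_sqrt_mul_exp_neg_rpow (by linarith : 0 < a),
    exp_rpow_sub_one_le_integral ha hθ₀]

theorem exp_power_arclength_bound_a_gt_one (a : ℝ) (ha : 1 < a) (R : ℝ → ℝ)
    (hR : ∀ t, R t = Real.exp (t ^ a) / Real.sqrt (1 + a ^ 2 * t ^ (2 * a - 2))) :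
    (∀ θ₀ > (0 : ℝ),
      (1 / R θ₀) *
        ((∫ θ in Set.Iic (0 : ℝ),
            Real.sqrt (1 + a ^ 2 * |θ| ^ (2 * a - 2)) * Real.exp (-|θ| ^ a)) +
          ∫ θ in (0 : ℝ)..θ₀,
            Real.sqrt (1 + a ^ 2 * θ ^ (2 * a - 2)) * Real.exp (θ ^ a)) ≥
        Real.sqrt (1 + a ^ 2 * θ₀ ^ (2 * a - 2)) ∧
      Real.sqrt (1 + a ^ 2 * θ₀ ^ (2 * a - 2)) ≥ a * θ₀ ^ (a - 1)) ∧
    Tendsto (fun θ₀ => (1 / R θ₀) *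
        ((∫ θ in Set.Iic (0 : ℝ),
            Real.sqrt (1 + a ^ 2 * |θ| ^ (2 * a - 2)) * Real.exp (-|θ| ^ a)) +
          ∫ θ in (0 : ℝ)..θ₀,
            Real.sqrt (1 + a ^ 2 * θ ^ (2 * a - 2)) * Real.exp (θ ^ a)))
      atTop atTop := by
  have hbound (θ₀ : ℝ) (hθ₀ : 0 < θ₀) : √(1 + a ^ 2 * θ₀ ^ (2 * a - 2)) ≤ 1 / R θ₀ *
      ((∫ θ in Iic (0 : ℝ), √(1 + a ^ 2 * |θ| ^ (2 * a - 2)) * exp (-|θ| ^ a)) +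
        ∫ θ in (0 : ℝ)..θ₀, √(1 + a ^ 2 * θ ^ (2 * a - 2)) * exp (θ ^ a)) := by
    rw [hR, one_div_div, div_mul_eq_mul_div, le_div_iff₀ (exp_pos _)]
    exact mul_le_mul_of_nonneg_left (exp_rpow_le_arclength ha.le hθ₀.le) (sqrt_nonneg _)
  refine ⟨fun θ₀ hθ₀ => ⟨hbound θ₀ hθ₀, mul_rpow_sub_one_le_sqrt a hθ₀.le⟩, ?_⟩
  have hgrowth : Tendsto (fun θ₀ : ℝ => a * θ₀ ^ (a - 1)) atTop atTop :=
    (tendsto_rpow_atTop (by linarith)).const_mul_atTop (by linarith)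
  refine tendsto_atTop_mono' atTop ?_ hgrowth
  filter_upwards [eventually_gt_atTop 0] with θ₀ hθ₀
  exact (mul_rpow_sub_one_le_sqrt a hθ₀.le).trans (hbound θ₀ hθ₀)
end

section
/- Let 0 < a < 1, and for θ₀ > 0 set R(θ₀) = e^{θ₀^a} / √(1 + a²·θ₀^{2a−2}). Then (1/R(θ₀))·∫₀^{θ₀} e^{θ^a} dθ = (√(1 + a²·θ₀^{2a−2}) / e^{θ₀^a})·∫₀^{θ₀} e^{θ^a} dθ tends to ∞ as θ₀ → ∞. -/
/-!
Since `θ ↦ θ ^ a` is concave, on a window `[θ₀ - M, θ₀]` of fixed length `M` it drops below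
`θ₀ ^ a` by at most `a M (θ₀ - M) ^ (a - 1)`, which tends to `0` because `a < 1`. Hence
`∫₀^θ₀ exp (θ ^ a) ≥ M exp (θ₀ ^ a) exp (-a M (θ₀ - M) ^ (a - 1))`, so the ratio
`∫₀^θ₀ exp (θ ^ a) / exp (θ₀ ^ a)` is eventually larger than any `M' < M`; the factor
`√(1 + a² θ₀ ^ (2a - 2))` is at least `1`.
-/

open Filter Real MeasureTheory

lemma rpow_le_rpow_add_mul_rpow_sub_one {a x y : ℝ} (ha0 : 0 ≤ a) (ha1 : a ≤ 1)
    (hx : 0 ≤ x) (hy : 0 < y) : x ^ a ≤ y ^ a + a * y ^ (a - 1) * (x - y) := by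
  have hs : -1 ≤ (x - y) / y := by
    rw [le_div_iff₀ hy]; linarith
  have hxy : x = y * (1 + (x - y) / y) := by field_simp; ring
  calc x ^ a = y ^ a * (1 + (x - y) / y) ^ a := by
        conv_lhs => rw [hxy]
        exact mul_rpow hy.le (by linarith)
    _ ≤ y ^ a * (1 + a * ((x - y) / y)) := by
        gcongr; exact rpow_one_add_le_one_add_mul_self hs ha0 ha1
    _ = y ^ a + a * y ^ (a - 1) * (x - y) := by
        rw [rpow_sub_one hy.ne']; field_simp

lemma sub_mul_le_integral_of_monotoneOn {f : ℝ → ℝ} {x y : ℝ} (hf : MonotoneOn f (Set.Icc 0 x))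
    (hf0 : 0 ≤ f 0) (hy : 0 ≤ y) (hyx : y ≤ x) : (x - y) * f y ≤ ∫ t in (0 : ℝ)..x, f t := by
  have hint : ∀ u ∈ Set.Icc 0 x, ∀ v ∈ Set.Icc 0 x, IntervalIntegrable f volume u v :=
    fun u hu v hv => (hf.mono (Set.uIcc_subset_Icc hu hv)).intervalIntegrable
  have h0 : (0 : ℝ) ∈ Set.Icc 0 x := ⟨le_rfl, hy.trans hyx⟩
  have hyI : y ∈ Set.Icc 0 x := ⟨hy, hyx⟩
  have hxI : x ∈ Set.Icc 0 x := ⟨hy.trans hyx, le_rfl⟩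
  have head : 0 ≤ ∫ t in (0 : ℝ)..y, f t :=
    intervalIntegral.integral_nonneg hy fun t ht => hf0.trans (hf h0 ⟨ht.1, ht.2.trans hyx⟩ ht.1)
  have tail : (x - y) * f y ≤ ∫ t in y..x, f t := by
    have := intervalIntegral.integral_mono_on hyx intervalIntegrable_const (hint y hyI x hxI)
      fun t ht => hf hyI ⟨hy.trans ht.1, ht.2⟩ ht.1
    simpa using this
  rw [← intervalIntegral.integral_add_adjacent_intervals (hint 0 h0 y hyI) (hint y hyI x hxI)]
  linarith

lemma monotoneOn_exp_rpow {a : ℝ} (ha : 0 ≤ a) :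
    MonotoneOn (fun θ : ℝ => exp (θ ^ a)) (Set.Ici 0) :=
  fun _ hu _ _ huv => exp_le_exp.mpr (rpow_le_rpow hu huv ha)

lemma mul_exp_neg_le_integral_exp_rpow_div {a M x : ℝ} (ha0 : 0 ≤ a) (ha1 : a ≤ 1)
    (hM : 0 ≤ M) (hMx : M < x) :
    M * exp (-(a * (x - M) ^ (a - 1) * M)) ≤ (∫ θ in (0 : ℝ)..x, exp (θ ^ a)) / exp (x ^ a) := by
  have hy : 0 < x - M := sub_pos.mpr hMx
  have hconcave := rpow_le_rpow_add_mul_rpow_sub_one ha0 ha1 (hM.trans hMx.le) hy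
  have hwindow : (x - (x - M)) * exp ((x - M) ^ a) ≤ ∫ θ in (0 : ℝ)..x, exp (θ ^ a) :=
    sub_mul_le_integral_of_monotoneOn ((monotoneOn_exp_rpow ha0).mono Set.Icc_subset_Ici_self)
      (exp_pos _).le hy.le (by linarith)
  rw [le_div_iff₀ (exp_pos _), mul_assoc, ← exp_add]
  refine le_trans ?_ hwindow
  rw [sub_sub_cancel]
  gcongr
  linarith

theorem tendsto_integral_exp_rpow_div_exp_rpow_atTop {a : ℝ} (ha0 : 0 ≤ a) (ha1 : a < 1) :
    Tendsto (fun x => (∫ θ in (0 : ℝ)..x, exp (θ ^ a)) / exp (x ^ a)) atTop atTop := by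
  refine tendsto_atTop.mpr fun C => ?_
  set M := max C 0 + 1
  have hM : 0 ≤ M := by positivity
  have hdecay : Tendsto (fun x : ℝ => (x - M) ^ (a - 1)) atTop (nhds 0) := by
    have := (tendsto_rpow_neg_atTop (y := 1 - a) (by linarith)).comp
      (tendsto_atTop_add_const_right atTop (-M) tendsto_id)
    simpa [Function.comp_def, sub_eq_add_neg] using this
  have hlower : Tendsto (fun x : ℝ => M * exp (-(a * (x - M) ^ (a - 1) * M))) atTop (nhds M) := by
    simpa using ((hdecay.const_mul a).mul_const M).neg.rexp.const_mul M
  have hCM : C < M := (le_max_left C 0).trans_lt (lt_add_one _)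
  filter_upwards [hlower.eventually (lt_mem_nhds hCM), eventually_gt_atTop M] with x hCx hMx
  exact hCx.le.trans (mul_exp_neg_le_integral_exp_rpow_div ha0 ha1.le hM hMx)

theorem exp_power_arclength_bound_a_lt_one (a : ℝ) (ha0 : 0 < a) (ha1 : a < 1)
    (R : ℝ → ℝ)
    (hR : ∀ t, R t = Real.exp (t ^ a) / Real.sqrt (1 + a ^ 2 * t ^ (2 * a - 2))) :
    (∀ θ₀ > (0 : ℝ),
      (1 / R θ₀) * ∫ θ in (0 : ℝ)..θ₀, Real.exp (θ ^ a) =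
        (Real.sqrt (1 + a ^ 2 * θ₀ ^ (2 * a - 2)) / Real.exp (θ₀ ^ a)) *
          ∫ θ in (0 : ℝ)..θ₀, Real.exp (θ ^ a)) ∧
    Tendsto (fun θ₀ => (1 / R θ₀) * ∫ θ in (0 : ℝ)..θ₀, Real.exp (θ ^ a))
      atTop atTop := by
  refine ⟨fun θ₀ _ => by rw [hR, one_div_div], ?_⟩
  refine tendsto_atTop_mono' _ ?_ (tendsto_integral_exp_rpow_div_exp_rpow_atTop ha0.le ha1)
  filter_upwards [eventually_ge_atTop 0] with θ₀ hθ₀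
  have hsqrt : 1 ≤ √(1 + a ^ 2 * θ₀ ^ (2 * a - 2)) :=
    one_le_sqrt.mpr (le_add_of_nonneg_right (by positivity))
  have hratio : 0 ≤ (∫ θ in (0 : ℝ)..θ₀, exp (θ ^ a)) / exp (θ₀ ^ a) :=
    div_nonneg (intervalIntegral.integral_nonneg hθ₀ fun _ _ => (exp_pos _).le) (exp_pos _).le
  rw [hR, one_div_div, div_mul_comm]
  exact le_mul_of_one_le_right hratio hsqrt
end

section
/- Let b > 0, and for θ₀ > 0 set R(θ₀) = θ₀^{b+1}·e^{θ₀} / √(θ₀² + (b + θ₀)²). Then (√2 / R(θ₀))·∫₀^{θ₀ + π} θ^{b}·e^{θ} dθ tends to 2·e^{π} as θ₀ → ∞, and 2·e^{π} > 13.82. -/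
/-!
For large `x` the integral `∫₀^x θ^b e^θ dθ` is dominated by the last stretch of length `log x`,
so it is asymptotic to `x^b e^x`: bound `θ^b` above by `x^b` on `[0, x]`, and below by `m^b`
on `[m, x]` with `m = x - log x`. Since `R(θ₀) ~ θ₀^b e^{θ₀} / √2` and
`(θ₀ + π)^b e^{θ₀ + π} ~ θ₀^b e^{θ₀} e^π`, the normalized arclength tends to `√2 · √2 · e^π`.
-/

open Filter Real Topology MeasureTheory

section IntegralRpowMulExp

variable {b : ℝ}

lemma intervalIntegrable_rpow_mul_exp (hb : 0 ≤ b) (a c : ℝ) :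
    IntervalIntegrable (fun θ : ℝ => θ ^ b * exp θ) volume a c :=
  ((continuousOn_id.rpow_const fun _ _ => Or.inr hb).mul
    continuous_exp.continuousOn).intervalIntegrable

lemma integral_rpow_mul_exp_le (hb : 0 ≤ b) {x : ℝ} (hx : 0 ≤ x) :
    ∫ θ in (0 : ℝ)..x, θ ^ b * exp θ ≤ x ^ b * exp x :=
  calc ∫ θ in (0 : ℝ)..x, θ ^ b * exp θ
      ≤ ∫ θ in (0 : ℝ)..x, x ^ b * exp θ :=
        intervalIntegral.integral_mono_on hx (intervalIntegrable_rpow_mul_exp hb 0 x)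
          ((continuous_exp.intervalIntegrable 0 x).const_mul _) fun θ hθ =>
            mul_le_mul_of_nonneg_right (rpow_le_rpow hθ.1 hθ.2 hb) (exp_pos θ).le
    _ = x ^ b * (exp x - 1) := by rw [intervalIntegral.integral_const_mul, integral_exp, exp_zero]
    _ ≤ x ^ b * exp x := by gcongr; linarith

lemma rpow_mul_exp_sub_le_integral (hb : 0 ≤ b) {m x : ℝ} (hm : 0 ≤ m) (hmx : m ≤ x) :
    m ^ b * (exp x - exp m) ≤ ∫ θ in (0 : ℝ)..x, θ ^ b * exp θ := by
  have head_nonneg : 0 ≤ ∫ θ in (0 : ℝ)..m, θ ^ b * exp θ :=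
    intervalIntegral.integral_nonneg hm fun θ hθ => mul_nonneg (rpow_nonneg hθ.1 b) (exp_pos θ).le
  have tail_ge : m ^ b * (exp x - exp m) ≤ ∫ θ in m..x, θ ^ b * exp θ :=
    calc m ^ b * (exp x - exp m) = ∫ θ in m..x, m ^ b * exp θ := by
          rw [intervalIntegral.integral_const_mul, integral_exp]
      _ ≤ ∫ θ in m..x, θ ^ b * exp θ :=
          intervalIntegral.integral_mono_on hmx
            ((continuous_exp.intervalIntegrable m x).const_mul _)
            (intervalIntegrable_rpow_mul_exp hb m x) fun θ hθ =>
              mul_le_mul_of_nonneg_right (rpow_le_rpow hm hθ.1 hb) (exp_pos θ).le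
  rw [← intervalIntegral.integral_add_adjacent_intervals
    (intervalIntegrable_rpow_mul_exp hb 0 m) (intervalIntegrable_rpow_mul_exp hb m x)]
  linarith

lemma one_sub_log_div_rpow_mul_le_integral_div (hb : 0 ≤ b) {x : ℝ} (hx : 1 ≤ x) :
    (1 - log x / x) ^ b * (1 - 1 / x) ≤
      (∫ θ in (0 : ℝ)..x, θ ^ b * exp θ) / (x ^ b * exp x) := by
  have hx0 : 0 < x := by linarith
  have hlog : log x ≤ x - 1 := log_le_sub_one_of_pos hx0
  have hm : 0 ≤ x - log x := by linarith
  have hmx : x - log x ≤ x := by linarith [log_nonneg hx]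
  rw [le_div_iff₀ (by positivity)]
  calc (1 - log x / x) ^ b * (1 - 1 / x) * (x ^ b * exp x)
      = ((1 - log x / x) * x) ^ b * (exp x - exp x / x) := by
        rw [mul_rpow (by rw [sub_nonneg, div_le_one hx0]; linarith) hx0.le]
        field_simp
    _ = (x - log x) ^ b * (exp x - exp (x - log x)) := by
        rw [exp_sub, exp_log hx0]
        field_simp
    _ ≤ _ := rpow_mul_exp_sub_le_integral hb hm hmx

theorem tendsto_integral_rpow_mul_exp_div (hb : 0 ≤ b) :
    Tendsto (fun x : ℝ => (∫ θ in (0 : ℝ)..x, θ ^ b * exp θ) / (x ^ b * exp x))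
      atTop (𝓝 1) := by
  have hlog : Tendsto (fun x : ℝ => log x / x) atTop (𝓝 0) := by
    simpa using tendsto_pow_log_div_mul_add_atTop 1 0 1 one_ne_zero
  have hinv : Tendsto (fun x : ℝ => 1 / x) atTop (𝓝 0) := by
    simpa [one_div] using tendsto_inv_atTop_zero (𝕜 := ℝ)
  have lower : Tendsto (fun x : ℝ => (1 - log x / x) ^ b * (1 - 1 / x)) atTop (𝓝 1) := by
    simpa using (((tendsto_const_nhds (x := (1 : ℝ))).sub hlog).rpow_const
      (by norm_num)).mul ((tendsto_const_nhds (x := (1 : ℝ))).sub hinv)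
  refine tendsto_of_tendsto_of_tendsto_of_le_of_le' lower tendsto_const_nhds ?_ ?_
  · filter_upwards [eventually_ge_atTop 1] with x hx
    exact one_sub_log_div_rpow_mul_le_integral_div hb hx
  · filter_upwards [eventually_gt_atTop 0] with x hx
    exact (div_le_one (by positivity)).mpr (integral_rpow_mul_exp_le hb hx.le)

end IntegralRpowMulExp

lemma sqrt_two_div_spiral_radius_mul_eq (b I : ℝ) {θ : ℝ} (hθ : 0 < θ) :
    sqrt 2 / (θ ^ (b + 1) * exp θ / sqrt (θ ^ 2 + (b + θ) ^ 2)) * I =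
      sqrt 2 * sqrt (1 + (1 + b / θ) ^ 2) * (I / ((θ + π) ^ b * exp (θ + π))) *
        ((1 + π / θ) ^ b * exp π) := by
  have hsqrt : sqrt (θ ^ 2 + (b + θ) ^ 2) = θ * sqrt (1 + (1 + b / θ) ^ 2) := by
    rw [← sqrt_sq hθ.le, ← sqrt_mul (sq_nonneg θ), sqrt_sq hθ.le]
    congr 1
    field_simp
    ring
  have hshift : (θ + π) ^ b = (1 + π / θ) ^ b * θ ^ b := by
    rw [← mul_rpow (by positivity) hθ.le]
    congr 1
    field_simp
  have : 0 < sqrt (1 + (1 + b / θ) ^ 2) := sqrt_pos.mpr (by positivity)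
  have : 0 < (1 + π / θ) ^ b := rpow_pos_of_pos (by positivity) b
  rw [hsqrt, rpow_add hθ, rpow_one, exp_add, hshift]
  field_simp

lemma tendsto_sqrt_two_mul_sqrt_one_add_sq (b : ℝ) :
    Tendsto (fun θ : ℝ => sqrt 2 * sqrt (1 + (1 + b / θ) ^ 2)) atTop (𝓝 2) := by
  have h : Tendsto (fun θ : ℝ => 1 + (1 + b / θ) ^ 2) atTop (𝓝 2) := by
    have := (tendsto_const_nhds (x := b)).div_atTop (tendsto_id (α := ℝ))
    convert (tendsto_const_nhds (x := (1 : ℝ))).add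
      (((tendsto_const_nhds (x := (1 : ℝ))).add this).pow 2) using 2 <;> norm_num
  simpa [mul_self_sqrt zero_le_two] using (h.sqrt.const_mul (sqrt 2))

lemma tendsto_one_add_div_rpow_mul_exp (b c : ℝ) :
    Tendsto (fun θ : ℝ => (1 + c / θ) ^ b * exp c) atTop (𝓝 (exp c)) := by
  have h : Tendsto (fun θ : ℝ => 1 + c / θ) atTop (𝓝 1) := by
    simpa using tendsto_const_nhds.add (tendsto_const_nhds.div_atTop (tendsto_id (α := ℝ)))
  simpa using (h.rpow_const (Or.inl one_ne_zero)).mul_const (exp c)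

lemma lt_two_mul_exp_pi : (13.82 : ℝ) < 2 * exp π := by
  have h := quadratic_le_exp_of_nonneg pi_pos.le
  nlinarith [pi_gt_three]

theorem power_exp_arclength_limit (b : ℝ) (hb : 0 < b) (R : ℝ → ℝ)
    (hR : ∀ t, R t = t ^ (b + 1) * Real.exp t / Real.sqrt (t ^ 2 + (b + t) ^ 2)) :
    Tendsto (fun θ₀ =>
        (Real.sqrt 2 / R θ₀) *
          ∫ θ in (0 : ℝ)..(θ₀ + Real.pi), θ ^ b * Real.exp θ)
      atTop (nhds (2 * Real.exp Real.pi)) ∧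
    2 * Real.exp Real.pi > 13.82 := by
  refine ⟨?_, lt_two_mul_exp_pi⟩
  have ratio := (tendsto_integral_rpow_mul_exp_div hb.le).comp
    (tendsto_atTop_add_const_right atTop π tendsto_id)
  have limit := ((tendsto_sqrt_two_mul_sqrt_one_add_sq b).mul ratio).mul
    (tendsto_one_add_div_rpow_mul_exp b π)
  rw [mul_one] at limit
  refine limit.congr' ?_
  filter_upwards [eventually_gt_atTop 0] with θ hθ
  rw [hR, sqrt_two_div_spiral_radius_mul_eq b _ hθ]
  rfl
end
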